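/- Let p : ℕ → [0,∞) with ∑_{s} p_s = 1 and λ := ∑_{s} s p_s ∈ (0,∞), for each s let (t_{s,ℓ})_{ℓ=0}^{s} be nonnegative reals with ∑_{ℓ=0}^{s} t_{s,ℓ} = 1, let α : ℕ → [0,1], and let π ∈ [0,1]. Define h(z) := ∑_{s=0}^∞ (1 − α_s) p_s ∑_{ℓ=0}^{s} t_{s,ℓ} ∑_{r=s−ℓ}^{s} r b_{s,r}(1 − π + π z) and g(z) := λ z (1 − π + π z) − h(z). Then g(0) ≤ 0 and g(1) = ∑_{s} s α_s p_s. If moreover there exists d ≥ 1 with α_d p_d > 0, then g(1) ≥ d α_d p_d > 0, the set Z := { z ∈ [0,1] : g(z) = 0 } is nonempty and has a greatest element ẑ, and ẑ < 1. -/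

import Mathlib

/-
The `s`-th summand of `h` is `(1 - α_s) p_s` times a `t_{s,·}`-weighted average of partial first
moments `∑_{r ≥ s-ℓ} r b_{s,r}(q)` of a binomial law on `{0,…,s}`, hence lies in `[0, s p_s]`.
So `h ≥ 0`, giving `g(0) ≤ 0`, and the series for `h` converges uniformly on `[0,1]`
(Weierstrass M-test with `∑ s p_s < ∞`), so `g` is continuous there. At `z = 1` the binomial law
is the point mass at `s`, so `h(1) = ∑ (1-α_s) s p_s` and `g(1) = ∑ s α_s p_s`. When this is
positive, the intermediate value theorem gives a zero of `g` in `[0,1]`; the zero set is compact,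
so it has a maximum, which is not `1`.
-/

/-- Binomial probability `b_{s,r}(p) = (s choose r) p^r (1-p)^(s-r)`. -/
noncomputable def binomProb (s r : ℕ) (p : ℝ) : ℝ :=
  (s.choose r : ℝ) * p ^ r * (1 - p) ^ (s - r)

/-- `h(z) = ∑_s (1-α_s) p_s ∑_{ℓ=0}^s t_{s,ℓ} ∑_{r=s-ℓ}^s r b_{s,r}(1-π+πz)`. -/
noncomputable def hFun (p : ℕ → ℝ) (t : ℕ → ℕ → ℝ) (α : ℕ → ℝ) (π z : ℝ) : ℝ :=
  ∑' s : ℕ, (1 - α s) * p s * ∑ ℓ ∈ Finset.range (s + 1),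
    t s ℓ * ∑ r ∈ Finset.Icc (s - ℓ) s, (r : ℝ) * binomProb s r (1 - π + π * z)

/-- `g(z) = λ z (1-π+πz) - h(z)`. -/
noncomputable def gFun (p : ℕ → ℝ) (t : ℕ → ℕ → ℝ) (α : ℕ → ℝ) (π z : ℝ) : ℝ :=
  (∑' s : ℕ, (s : ℝ) * p s) * z * (1 - π + π * z) - hFun p t α π z

open Set Finset

theorem exists_isGreatest_zeroSet_lt {f : ℝ → ℝ} {a b : ℝ} (hab : a ≤ b)
    (hf : ContinuousOn f (Icc a b)) (ha : f a ≤ 0) (hb : 0 < f b) :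
    ∃ c, IsGreatest {x ∈ Icc a b | f x = 0} c ∧ c < b := by
  obtain ⟨x₀, hx₀, hfx₀⟩ := intermediate_value_Icc hab hf ⟨ha, hb.le⟩
  have hclosed : IsClosed {x ∈ Icc a b | f x = 0} :=
    hf.preimage_isClosed_of_isClosed isClosed_Icc isClosed_singleton
  obtain ⟨c, hc⟩ := (isCompact_Icc.of_isClosed_subset hclosed fun x hx => hx.1).exists_isGreatest
    ⟨x₀, hx₀, hfx₀⟩
  refine ⟨c, hc, lt_of_le_of_ne hc.1.1.2 ?_⟩
  rintro rfl
  exact hb.ne' hc.1.2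

lemma binomProb_nonneg (s r : ℕ) {q : ℝ} (hq : q ∈ Icc (0 : ℝ) 1) : 0 ≤ binomProb s r q := by
  have := hq.1
  have := sub_nonneg.2 hq.2
  unfold binomProb
  positivity

lemma sum_binomProb (s : ℕ) (q : ℝ) : ∑ r ∈ range (s + 1), binomProb s r q = 1 := by
  calc ∑ r ∈ range (s + 1), binomProb s r q
      = ∑ r ∈ range (s + 1), q ^ r * (1 - q) ^ (s - r) * s.choose r :=
        sum_congr rfl fun r _ => by unfold binomProb; ring
    _ = 1 := by rw [← add_pow, add_sub_cancel, one_pow]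

lemma sum_Icc_mul_binomProb_mem_Icc (s ℓ : ℕ) {q : ℝ} (hq : q ∈ Icc (0 : ℝ) 1) :
    ∑ r ∈ Icc (s - ℓ) s, (r : ℝ) * binomProb s r q ∈ Icc 0 (s : ℝ) := by
  have hterm : ∀ r : ℕ, 0 ≤ (r : ℝ) * binomProb s r q := fun r =>
    mul_nonneg r.cast_nonneg (binomProb_nonneg s r hq)
  refine ⟨sum_nonneg fun r _ => hterm r, ?_⟩
  calc ∑ r ∈ Icc (s - ℓ) s, (r : ℝ) * binomProb s r q
      ≤ ∑ r ∈ range (s + 1), (r : ℝ) * binomProb s r q :=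
        sum_le_sum_of_subset_of_nonneg
          (fun r hr => mem_range_succ_iff.2 (mem_Icc.1 hr).2) fun r _ _ => hterm r
    _ ≤ ∑ r ∈ range (s + 1), (s : ℝ) * binomProb s r q := by
        gcongr with r hr
        · exact binomProb_nonneg s r hq
        · exact mem_range_succ_iff.1 hr
    _ = s := by rw [← mul_sum, sum_binomProb, mul_one]

lemma sum_Icc_mul_binomProb_one (s ℓ : ℕ) :
    ∑ r ∈ Icc (s - ℓ) s, (r : ℝ) * binomProb s r 1 = s := by
  rw [sum_eq_single_of_mem s (by simp)]
  · simp [binomProb]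
  · intro r hr hne
    have hsr : s - r ≠ 0 := Nat.sub_ne_zero_of_lt (lt_of_le_of_ne (mem_Icc.1 hr).2 hne)
    simp [binomProb, zero_pow hsr]

section Summand

variable {p : ℕ → ℝ} {t : ℕ → ℕ → ℝ} {α : ℕ → ℝ} {π : ℝ}

noncomputable def hSummand (p : ℕ → ℝ) (t : ℕ → ℕ → ℝ) (α : ℕ → ℝ) (π : ℝ) (s : ℕ) (z : ℝ) :
    ℝ :=
  (1 - α s) * p s * ∑ ℓ ∈ range (s + 1),
    t s ℓ * ∑ r ∈ Icc (s - ℓ) s, (r : ℝ) * binomProb s r (1 - π + π * z)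

lemma hFun_eq_tsum (p : ℕ → ℝ) (t : ℕ → ℕ → ℝ) (α : ℕ → ℝ) (π z : ℝ) :
    hFun p t α π z = ∑' s, hSummand p t α π s z := rfl

lemma continuous_hSummand (s : ℕ) : Continuous (hSummand p t α π s) := by
  unfold hSummand binomProb
  fun_prop

lemma hSummand_mem_Icc (hp : ∀ s, 0 ≤ p s) (ht : ∀ s ℓ, 0 ≤ t s ℓ)
    (ht1 : ∀ s, ∑ ℓ ∈ range (s + 1), t s ℓ = 1) (hα : ∀ s, α s ∈ Icc (0 : ℝ) 1)
    (hπ : π ∈ Icc (0 : ℝ) 1) (s : ℕ) {z : ℝ} (hz : z ∈ Icc (0 : ℝ) 1) :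
    hSummand p t α π s z ∈ Icc 0 ((s : ℝ) * p s) := by
  have hq : 1 - π + π * z ∈ Icc (0 : ℝ) 1 := by
    obtain ⟨hπ0, hπ1⟩ := hπ
    obtain ⟨hz0, hz1⟩ := hz
    constructor <;> nlinarith
  have hinner := fun ℓ => sum_Icc_mul_binomProb_mem_Icc s ℓ hq
  have havg_nonneg : 0 ≤ ∑ ℓ ∈ range (s + 1),
      t s ℓ * ∑ r ∈ Icc (s - ℓ) s, (r : ℝ) * binomProb s r (1 - π + π * z) :=
    sum_nonneg fun ℓ _ => mul_nonneg (ht s ℓ) (hinner ℓ).1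
  have havg_le : ∑ ℓ ∈ range (s + 1),
      t s ℓ * ∑ r ∈ Icc (s - ℓ) s, (r : ℝ) * binomProb s r (1 - π + π * z) ≤ s :=
    calc _ ≤ ∑ ℓ ∈ range (s + 1), t s ℓ * (s : ℝ) :=
          sum_le_sum fun ℓ _ => mul_le_mul_of_nonneg_left (hinner ℓ).2 (ht s ℓ)
      _ = s := by rw [← sum_mul, ht1, one_mul]
  have hweight : (1 - α s) * p s ∈ Icc 0 (p s) := by
    obtain ⟨hα0, hα1⟩ := hα s
    constructor <;> nlinarith [hp s]
  unfold hSummand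
  exact ⟨mul_nonneg hweight.1 havg_nonneg,
    (mul_le_mul hweight.2 havg_le havg_nonneg (hp s)).trans_eq (mul_comm _ _)⟩

lemma hSummand_one (ht1 : ∀ s, ∑ ℓ ∈ range (s + 1), t s ℓ = 1) (s : ℕ) :
    hSummand p t α π s 1 = (1 - α s) * p s * s := by
  simp only [hSummand, mul_one, sub_add_cancel, sum_Icc_mul_binomProb_one, ← sum_mul, ht1,
    one_mul]

lemma gFun_zero_nonpos (hp : ∀ s, 0 ≤ p s) (ht : ∀ s ℓ, 0 ≤ t s ℓ)
    (ht1 : ∀ s, ∑ ℓ ∈ range (s + 1), t s ℓ = 1) (hα : ∀ s, α s ∈ Icc (0 : ℝ) 1)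
    (hπ : π ∈ Icc (0 : ℝ) 1) : gFun p t α π 0 ≤ 0 := by
  have hh0 : 0 ≤ hFun p t α π 0 :=
    tsum_nonneg fun s => (hSummand_mem_Icc hp ht ht1 hα hπ s ⟨le_rfl, zero_le_one⟩).1
  simpa [gFun] using hh0

lemma gFun_one (hp : ∀ s, 0 ≤ p s) (hsum : Summable fun s : ℕ => (s : ℝ) * p s)
    (ht : ∀ s ℓ, 0 ≤ t s ℓ) (ht1 : ∀ s, ∑ ℓ ∈ range (s + 1), t s ℓ = 1)
    (hα : ∀ s, α s ∈ Icc (0 : ℝ) 1) (hπ : π ∈ Icc (0 : ℝ) 1) :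
    gFun p t α π 1 = ∑' s : ℕ, (s : ℝ) * α s * p s := by
  have hbound := fun s => hSummand_mem_Icc hp ht ht1 hα hπ s (z := 1) ⟨zero_le_one, le_rfl⟩
  have hsum1 : Summable fun s => hSummand p t α π s 1 :=
    .of_nonneg_of_le (fun s => (hbound s).1) (fun s => (hbound s).2) hsum
  rw [gFun, hFun_eq_tsum]
  simp only [mul_one, sub_add_cancel]
  rw [← hsum.tsum_sub hsum1]
  exact tsum_congr fun s => by rw [hSummand_one ht1]; ring

lemma continuousOn_gFun (hp : ∀ s, 0 ≤ p s) (hsum : Summable fun s : ℕ => (s : ℝ) * p s)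
    (ht : ∀ s ℓ, 0 ≤ t s ℓ) (ht1 : ∀ s, ∑ ℓ ∈ range (s + 1), t s ℓ = 1)
    (hα : ∀ s, α s ∈ Icc (0 : ℝ) 1) (hπ : π ∈ Icc (0 : ℝ) 1) :
    ContinuousOn (gFun p t α π) (Icc 0 1) := by
  have hbound := hSummand_mem_Icc hp ht ht1 hα hπ
  exact ContinuousOn.sub (by fun_prop) (continuousOn_tsum
    (fun s => (continuous_hSummand s).continuousOn) hsum fun s z hz =>
      (Real.norm_of_nonneg (hbound s hz).1).trans_le (hbound s hz).2)

lemma summable_natCast_mul_mul (hp : ∀ s, 0 ≤ p s) (hsum : Summable fun s : ℕ => (s : ℝ) * p s)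
    (hα : ∀ s, α s ∈ Icc (0 : ℝ) 1) : Summable fun s : ℕ => (s : ℝ) * α s * p s :=
  .of_nonneg_of_le (fun s => mul_nonneg (mul_nonneg s.cast_nonneg (hα s).1) (hp s))
    (fun s => mul_le_mul_of_nonneg_right (mul_le_of_le_one_right s.cast_nonneg (hα s).2) (hp s))
    hsum

end Summand

theorem stmt14_general (p : ℕ → ℝ) (hp : ∀ s, 0 ≤ p s)
    (hsum : Summable fun s : ℕ => (s : ℝ) * p s)
    (t : ℕ → ℕ → ℝ) (ht : ∀ s ℓ, 0 ≤ t s ℓ)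
    (ht1 : ∀ s, ∑ ℓ ∈ Finset.range (s + 1), t s ℓ = 1)
    (α : ℕ → ℝ) (hα : ∀ s, α s ∈ Set.Icc (0:ℝ) 1)
    (π : ℝ) (hπ : π ∈ Set.Icc (0:ℝ) 1) :
    gFun p t α π 0 ≤ 0 ∧
    gFun p t α π 1 = ∑' s : ℕ, (s : ℝ) * α s * p s ∧
    ∀ d : ℕ, 1 ≤ d → 0 < α d * p d →
      (d : ℝ) * α d * p d ≤ gFun p t α π 1 ∧
      0 < gFun p t α π 1 ∧
      ∃ zhat ∈ {z ∈ Set.Icc (0:ℝ) 1 | gFun p t α π z = 0},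
        zhat < 1 ∧ ∀ z ∈ {z ∈ Set.Icc (0:ℝ) 1 | gFun p t α π z = 0}, z ≤ zhat := by
  have hg1 := gFun_one hp hsum ht ht1 hα hπ
  refine ⟨gFun_zero_nonpos hp ht ht1 hα hπ, hg1, fun d hd hdpos => ?_⟩
  have hdterm : (d : ℝ) * α d * p d ≤ gFun p t α π 1 :=
    hg1 ▸ (summable_natCast_mul_mul hp hsum hα).le_tsum d fun s _ =>
      mul_nonneg (mul_nonneg s.cast_nonneg (hα s).1) (hp s)
  have hg1pos : 0 < gFun p t α π 1 :=
    lt_of_lt_of_le (by rw [mul_assoc]; exact mul_pos (by exact_mod_cast hd) hdpos) hdterm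
  obtain ⟨zhat, ⟨hzhat, hmax⟩, hlt⟩ := exists_isGreatest_zeroSet_lt zero_le_one
    (continuousOn_gFun hp hsum ht ht1 hα hπ) (gFun_zero_nonpos hp ht ht1 hα hπ) hg1pos
  exact ⟨hdterm, hg1pos, zhat, hzhat, hlt, hmax⟩

theorem stmt14 (p : ℕ → ℝ) (hp : ∀ s, 0 ≤ p s) (hpsum : Summable p)
    (hp1 : ∑' s : ℕ, p s = 1)
    (hsum : Summable fun s : ℕ => (s : ℝ) * p s)
    (hlampos : 0 < ∑' s : ℕ, (s : ℝ) * p s)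
    (t : ℕ → ℕ → ℝ) (ht : ∀ s ℓ, 0 ≤ t s ℓ)
    (ht1 : ∀ s, ∑ ℓ ∈ Finset.range (s + 1), t s ℓ = 1)
    (α : ℕ → ℝ) (hα : ∀ s, α s ∈ Set.Icc (0:ℝ) 1)
    (π : ℝ) (hπ : π ∈ Set.Icc (0:ℝ) 1) :
    gFun p t α π 0 ≤ 0 ∧
    gFun p t α π 1 = ∑' s : ℕ, (s : ℝ) * α s * p s ∧
    ∀ d : ℕ, 1 ≤ d → 0 < α d * p d →
      (d : ℝ) * α d * p d ≤ gFun p t α π 1 ∧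
      0 < gFun p t α π 1 ∧
      ∃ zhat ∈ {z ∈ Set.Icc (0:ℝ) 1 | gFun p t α π z = 0},
        zhat < 1 ∧ ∀ z ∈ {z ∈ Set.Icc (0:ℝ) 1 | gFun p t α π z = 0}, z ≤ zhat :=
  stmt14_general p hp hsum t ht ht1 α hα π hπ
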